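/- Let (α,β) be an admissible non-null pair, b the least x ∈ [1/2,1) with Σ_{n≥0} α_n·xⁿ = Σ_{n≥0} β_n·xⁿ, B := 1/b, and p := π_b(α). Let x ≥ 0 be a real number and let N be the least nonnegative integer such that y := b^N·(1−b)·x < p (such N exists). Let σ := τ̂_{(B,p,−)}(y) and define the decimal d by d(j) = σ_{N+j} for j ≥ −N and d(j) = 0 for j < −N. Then d ∈ Ω^•_{(α,β,−)} and Σ_{j∈ℤ} d(j)·B^{−j} = x. The analogous statement holds with τ̂_{(B,p,+)} in place of τ̂_{(B,p,−)} and Ω^•_{(α,β,+)} in place of Ω^•_{(α,β,−)}. -/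

import Mathlib

/-!
Let `b` be the least root and `p = π_b(α)`. The crux is that `α` and `β` are themselves
itineraries of `p`: `π_b(Sⁿα) ≤ p` when `αₙ = 0` and `π_b(Sⁿα) ≥ p` when `αₙ = 1`, and likewise
for `β`. Let `M(x) ≥ 0` be the largest violation of these inequalities at `x` over the shift
orbits of `α` and `β`. By admissibility a violation, cut at the first digit where the two
strings differ, is `x^j` times two violations minus `π_x β - π_x α`, so
`M ≤ max 0 (x (2M - (π_x β - π_x α)))`. Since `M` is Lipschitz, the intermediate value theorem
keeps `π_x β - π_x α - 2M` positive on `[0, b)`, hence `M = 0` there and, by continuity, at `b`.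

Once `α` and `β` are itineraries of `p`, the expanding maps `f_{(B,p,±)}` order itineraries as
they order points, so every shift of the itinerary of `y < p` avoids the forbidden intervals.
Finally every itinerary of an orbit starting at `y` is a `b`-expansion, `π_b(σ) = y`, which
gives the radix value.
-/

open scoped Classical

/-- Infinite binary strings. -/
abbrev Omega : Type := ℕ → Bool

/-- The shift operator. -/
def shift (ω : Omega) : Omega := fun n => ω (n + 1)

/-- Strict lexicographic order on `Omega`. -/
def lexLt (σ ω : Omega) : Prop :=
  ∃ k : ℕ, (∀ i, i < k → σ i = ω i) ∧ σ k < ω k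

/-- Non-strict lexicographic order on `Omega`. -/
def lexLe (σ ω : Omega) : Prop := lexLt σ ω ∨ σ = ω

/-- An admissible pair of strings. -/
def Admissible (α β : Omega) : Prop :=
  α 0 = false ∧ α 1 = true ∧ β 0 = true ∧ β 1 = false ∧
  (∀ n : ℕ, ¬ (lexLt α (shift^[n] α) ∧ lexLe (shift^[n] α) β)) ∧
  (∀ n : ℕ, ¬ (lexLe α (shift^[n] β) ∧ lexLt (shift^[n] β) β))

/-- The address space `Ω_{(α,β,−)}`. -/
def OmegaMinus (α β : Omega) : Set Omega :=
  {ω | ∀ n : ℕ, ¬ (lexLt α (shift^[n] ω) ∧ lexLe (shift^[n] ω) β)}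

/-- The address space `Ω_{(α,β,+)}`. -/
def OmegaPlus (α β : Omega) : Set Omega :=
  {ω | ∀ n : ℕ, ¬ (lexLe α (shift^[n] ω) ∧ lexLt (shift^[n] ω) β)}

/-- The address space `Ω_{(α,β)}`. -/
def OmegaUnion (α β : Omega) : Set Omega := OmegaMinus α β ∪ OmegaPlus α β

/-- Length-`n` initial segments of the elements of `Γ`. -/
def initSegs (Γ : Set Omega) (n : ℕ) : Set (Fin n → Bool) :=
  (fun ω (i : Fin n) => ω i) '' Γ

/-- Exponential growth rate `h(Γ)`. -/
noncomputable def growth (Γ : Set Omega) : ℝ :=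
  Filter.limsup (fun n : ℕ => Real.log ((initSegs Γ n).ncard) / (n : ℝ)) Filter.atTop

/-- The projection map `π_x`. -/
noncomputable def proj (x : ℝ) (ω : Omega) : ℝ :=
  (1 - x) * ∑' k : ℕ, (if ω k then (1 : ℝ) else 0) * x ^ k

/-- The equation `Σ α_n x^n = Σ β_n x^n`. -/
def seriesEq (α β : Omega) (x : ℝ) : Prop :=
  (∑' n : ℕ, (if α n then (1 : ℝ) else 0) * x ^ n) =
    (∑' n : ℕ, (if β n then (1 : ℝ) else 0) * x ^ n)

/-- Solutions in `[1/2,1)` of `Σ α_n x^n = Σ β_n x^n`. -/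
def baseSet (α β : Omega) : Set ℝ :=
  {x : ℝ | x ∈ Set.Ico (1/2 : ℝ) 1 ∧ seriesEq α β x}

/-- A decimal: a two-sided binary string vanishing far to the left. -/
def IsDecimal (d : ℤ → Bool) : Prop := ∃ m : ℤ, ∀ j, j < m → d j = false

/-- Strict order on decimals. -/
def decLt (d e : ℤ → Bool) : Prop :=
  ∃ j : ℤ, (∀ i, i < j → d i = e i) ∧ d j < e j

/-- The set `Γ^•` of decimals obtained from strings in `Γ`. -/
def dot (Γ : Set Omega) : Set (ℤ → Bool) :=
  {d | ∃ m : ℤ, ∃ γ ∈ Γ, (∀ j, j < m → d j = false) ∧ ∀ i : ℕ, d (m + i) = γ i}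

/-- Prepend a `0` to a string. -/
def cons0 (ω : Omega) : Omega := fun n => match n with | 0 => false | k + 1 => ω k

/-- The space `Ω⁰_{(α,β,−)}`. -/
def Omega0Minus (α β : Omega) : Set Omega :=
  {ω ∈ OmegaMinus α β | lexLe (cons0 ω) α}

/-- The space `Ω⁰_{(α,β,+)}`. -/
def Omega0Plus (α β : Omega) : Set Omega :=
  {ω ∈ OmegaPlus α β | lexLt (cons0 ω) α}

/-- The address space of decimals `Ω^•_{(α,β,−)}`. -/
def dotMinus (α β : Omega) : Set (ℤ → Bool) := dot (Omega0Minus α β)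

/-- The address space of decimals `Ω^•_{(α,β,+)}`. -/
def dotPlus (α β : Omega) : Set (ℤ → Bool) := dot (Omega0Plus α β)

/-- The address space of decimals `Ω^•_{(α,β)}`. -/
def dotUnion (α β : Omega) : Set (ℤ → Bool) :=
  dot (Omega0Minus α β ∪ Omega0Plus α β)

/-- The radix map `d ↦ Σ_{j ∈ ℤ} d(j)·B^(−j)`. -/
noncomputable def radixVal (B : ℝ) (d : ℤ → Bool) : ℝ :=
  ∑' j : ℤ, (if d j then (1 : ℝ) else 0) * B ^ (-j)

/-- Shift invariance for a set of decimals. -/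
def ShiftInvariantDec (Γ : Set (ℤ → Bool)) : Prop :=
  ∀ d ∈ Γ, ∀ k m : ℤ,
    (fun j : ℤ => if m ≤ j then d (j + k) else false) ∈ Γ

/-- The map `f_{(B,p,−)}`. -/
noncomputable def fMinus (B p : ℝ) : ℝ → ℝ :=
  fun x => if x ≤ p then B * x else B * x + 1 - B

/-- The map `f_{(B,p,+)}`. -/
noncomputable def fPlus (B p : ℝ) : ℝ → ℝ :=
  fun x => if x < p then B * x else B * x + 1 - B

/-- The itinerary map `τ̂_{(B,p,−)}`. -/
noncomputable def itinMinus (B p : ℝ) (y : ℝ) : Omega :=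
  fun k => if p < (fMinus B p)^[k] y then true else false

/-- The itinerary map `τ̂_{(B,p,+)}`. -/
noncomputable def itinPlus (B p : ℝ) (y : ℝ) : Omega :=
  fun k => if p ≤ (fPlus B p)^[k] y then true else false

open Set Filter Topology

lemma lexLt_iff_toLex_lt {σ τ : Omega} : lexLt σ τ ↔ toLex σ < toLex τ := Iff.rfl

lemma lexLe_iff_toLex_le {σ τ : Omega} : lexLe σ τ ↔ toLex σ ≤ toLex τ := by
  rw [le_iff_lt_or_eq, toLex_inj]; rfl

lemma toLex_lt_of_head {σ τ : Omega} (hσ : σ 0 = false) (hτ : τ 0 = true) :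
    toLex σ < toLex τ :=
  ⟨0, fun _ h => absurd h (Nat.not_lt_zero _), by simp [hσ, hτ]⟩

lemma shift_iterate_apply (n : ℕ) (γ : Omega) (k : ℕ) : (shift^[n] γ) k = γ (k + n) := by
  induction n generalizing k with
  | zero => rfl
  | succ n ih => rw [Function.iterate_succ_apply', shift, ih]; congr 1; omega

section Projection

variable {x : ℝ}

lemma summable_proj (γ : Omega) (hx0 : 0 ≤ x) (hx1 : x < 1) :
    Summable fun k => (if γ k then (1 : ℝ) else 0) * x ^ k :=
  (summable_geometric_of_lt_one hx0 hx1).of_nonneg_of_le (fun k => by positivity)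
    (fun k => by split_ifs <;> simp [pow_nonneg hx0])

lemma proj_mem_Icc (γ : Omega) (hx0 : 0 ≤ x) (hx1 : x < 1) : proj x γ ∈ Icc 0 1 := by
  have hle : ∑' k, (if γ k then (1 : ℝ) else 0) * x ^ k ≤ (1 - x)⁻¹ := by
    rw [← tsum_geometric_of_lt_one hx0 hx1]
    exact (summable_proj γ hx0 hx1).tsum_le_tsum (fun k => by split_ifs <;> simp [pow_nonneg hx0])
      (summable_geometric_of_lt_one hx0 hx1)
  refine ⟨mul_nonneg (by linarith) (tsum_nonneg fun k => by positivity), ?_⟩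
  calc proj x γ ≤ (1 - x) * (1 - x)⁻¹ := mul_le_mul_of_nonneg_left hle (by linarith)
    _ = 1 := mul_inv_cancel₀ (by linarith)

lemma proj_eq_head_add (γ : Omega) (hx0 : 0 ≤ x) (hx1 : x < 1) :
    proj x γ = (1 - x) * (if γ 0 then 1 else 0) + x * proj x (shift γ) := by
  have htail : ∀ k, (if γ (k + 1) then (1 : ℝ) else 0) * x ^ (k + 1) =
      x * ((if shift γ k then (1 : ℝ) else 0) * x ^ k) := fun k => by rw [shift]; ring
  rw [proj, proj, (summable_proj γ hx0 hx1).tsum_eq_zero_add, tsum_congr htail, tsum_mul_left]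
  ring

lemma proj_le_of_head_false {γ : Omega} (hx0 : 0 ≤ x) (hx1 : x < 1) (h : γ 0 = false) :
    proj x γ ≤ x := by
  have := (proj_mem_Icc (shift γ) hx0 hx1).2
  rw [proj_eq_head_add γ hx0 hx1, h]
  simpa using mul_le_of_le_one_right hx0 this

lemma one_sub_le_proj_of_head_true {γ : Omega} (hx0 : 0 ≤ x) (hx1 : x < 1) (h : γ 0 = true) :
    1 - x ≤ proj x γ := by
  have := (proj_mem_Icc (shift γ) hx0 hx1).1
  rw [proj_eq_head_add γ hx0 hx1, h]
  simpa using mul_nonneg hx0 this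

lemma proj_sub_proj_of_prefix (hx0 : 0 ≤ x) (hx1 : x < 1) :
    ∀ (k : ℕ) {γ δ : Omega}, (∀ i < k, γ i = δ i) →
      proj x γ - proj x δ = x ^ k * (proj x (shift^[k] γ) - proj x (shift^[k] δ))
  | 0, _, _, _ => by simp
  | k + 1, γ, δ, h => by
    rw [proj_eq_head_add γ hx0 hx1, proj_eq_head_add δ hx0 hx1, h 0 k.succ_pos,
      Function.iterate_succ_apply, Function.iterate_succ_apply, pow_succ', mul_assoc,
      ← proj_sub_proj_of_prefix hx0 hx1 k (γ := shift γ) (δ := shift δ)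
        fun i hi => h (i + 1) (by omega)]
    ring

lemma abs_one_sub_mul_pow_sub_le {c y : ℝ} (hc : c ≤ 1) (hx : x ∈ Icc 0 c) (hy : y ∈ Icc 0 c)
    (k : ℕ) : |(1 - x) * x ^ k - (1 - y) * y ^ k| ≤ (k * c ^ (k - 1) + c ^ k) * |x - y| := by
  obtain ⟨hx0, hxc⟩ := hx
  obtain ⟨hy0, hyc⟩ := hy
  have hpow : |x ^ k - y ^ k| ≤ |x - y| * k * c ^ (k - 1) := by
    refine (abs_pow_sub_pow_le x y k).trans ?_
    gcongr
    exact max_le (by rwa [abs_of_nonneg hx0]) (by rwa [abs_of_nonneg hy0])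
  calc |(1 - x) * x ^ k - (1 - y) * y ^ k| = |(1 - x) * (x ^ k - y ^ k) + (y - x) * y ^ k| := by
        ring_nf
    _ ≤ 1 * |x ^ k - y ^ k| + |x - y| * c ^ k := by
        refine (abs_add_le _ _).trans (add_le_add ?_ ?_) <;> rw [abs_mul]
        · gcongr; rw [abs_le]; constructor <;> linarith
        · rw [abs_sub_comm, abs_pow, abs_of_nonneg hy0]; gcongr
    _ ≤ (k * c ^ (k - 1) + c ^ k) * |x - y| := by nlinarith [abs_nonneg (x - y)]

lemma exists_lipschitzOnWith_proj {c : ℝ} (hc0 : 0 ≤ c) (hc1 : c < 1) :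
    ∃ K : NNReal, ∀ γ : Omega, LipschitzOnWith K (fun x => proj x γ) (Icc 0 c) := by
  set u : ℕ → ℝ := fun k => k * c ^ (k - 1) + c ^ k
  have hu : Summable u := by
    refine Summable.add ?_ (summable_geometric_of_lt_one hc0 hc1)
    refine (summable_nat_add_iff 1).mp ?_
    simpa [add_mul] using ((summable_pow_mul_geometric_of_norm_lt_one 1
      (by rwa [Real.norm_of_nonneg hc0])).add (summable_geometric_of_lt_one hc0 hc1))
  refine ⟨Real.toNNReal (∑' k, u k), fun γ => LipschitzOnWith.of_dist_le' fun x hx y hy => ?_⟩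
  have hx1 : x < 1 := hx.2.trans_lt hc1
  have hy1 : y < 1 := hy.2.trans_lt hc1
  set t : ℝ → ℕ → ℝ := fun z k => (if γ k then (1 : ℝ) else 0) * ((1 - z) * z ^ k)
  have hterm : ∀ k, ‖t x k - t y k‖ ≤ u k * |x - y| := fun k => by
    simp only [t, Real.norm_eq_abs, ← mul_sub, abs_mul]
    refine (mul_le_of_le_one_left (abs_nonneg _) (by split_ifs <;> simp)).trans ?_
    exact abs_one_sub_mul_pow_sub_le hc1.le hx hy k
  have hproj : ∀ z, z < 1 → 0 ≤ z → proj z γ = ∑' k, t z k := fun z hz1 hz0 => by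
    simp only [proj, t, ← tsum_mul_left]
    congr 1; ext k; ring
  have hts : ∀ z, z < 1 → 0 ≤ z → Summable (t z) := fun z hz1 hz0 =>
    ((summable_proj γ hz0 hz1).mul_left (1 - z)).congr fun k => by simp only [t]; ring
  rw [Real.dist_eq, Real.dist_eq, hproj x hx1 hx.1, hproj y hy1 hy.1,
    ← (hts x hx1 hx.1).tsum_sub (hts y hy1 hy.1), ← tsum_mul_right]
  have hsum := (hu.mul_right |x - y|).of_norm_bounded hterm
  exact (norm_tsum_le_tsum_norm hsum.norm).trans (hsum.norm.tsum_le_tsum hterm (hu.mul_right _))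

lemma proj_shift_iterate_succ {B : ℝ} (hx0 : 0 ≤ x) (hx1 : x < 1) (hBx : B * x = 1)
    (γ : Omega) (n : ℕ) : proj x (shift^[n + 1] γ) =
      if γ n then B * proj x (shift^[n] γ) + 1 - B else B * proj x (shift^[n] γ) := by
  have h := proj_eq_head_add (shift^[n] γ) hx0 hx1
  rw [shift_iterate_apply, zero_add, ← Function.iterate_succ_apply' shift] at h
  split_ifs at h ⊢
  · linear_combination (-B) * h + (1 - proj x (shift^[n + 1] γ)) * hBx
  · linear_combination (-B) * h - proj x (shift^[n + 1] γ) * hBx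

end Projection

section LeastRoot

variable {α β : Omega} {x : ℝ}

def orbitSet (α β : Omega) : Set Omega := range (shift^[·] α) ∪ range (shift^[·] β)

lemma left_mem_orbitSet : α ∈ orbitSet α β := Or.inl ⟨0, rfl⟩

lemma right_mem_orbitSet : β ∈ orbitSet α β := Or.inr ⟨0, rfl⟩

lemma shift_iterate_mem_orbitSet {φ : Omega} (hφ : φ ∈ orbitSet α β) (j : ℕ) :
    shift^[j] φ ∈ orbitSet α β := by
  rcases hφ with ⟨n, rfl⟩ | ⟨n, rfl⟩
  exacts [Or.inl ⟨j + n, Function.iterate_add_apply ..⟩,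
    Or.inr ⟨j + n, Function.iterate_add_apply ..⟩]

lemma Admissible.toLex_le_of_mem_orbitSet (hadm : Admissible α β) {φ : Omega}
    (hφ : φ ∈ orbitSet α β) :
    (φ 0 = false → toLex φ ≤ toLex α) ∧ (φ 0 = true → toLex β ≤ toLex φ) := by
  obtain ⟨hα0, -, hβ0, -, hαorb, hβorb⟩ := hadm
  have hIoo : ¬ (toLex α < toLex φ ∧ toLex φ < toLex β) := by
    simp only [lexLe_iff_toLex_le, lexLt_iff_toLex_lt] at hαorb hβorb
    rintro ⟨h1, h2⟩
    rcases hφ with ⟨n, rfl⟩ | ⟨n, rfl⟩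
    exacts [hαorb n ⟨h1, h2.le⟩, hβorb n ⟨h1.le, h2⟩]
  refine ⟨fun h => not_lt.mp fun h' => hIoo ⟨h', toLex_lt_of_head h hβ0⟩,
    fun h => not_lt.mp fun h' => hIoo ⟨toLex_lt_of_head hα0 h, h'⟩⟩

/-- How far `φ` lies on the wrong side of `α` (if `φ 0 = false`) or of `β` (if `φ 0 = true`)
in the order of the `π_x`-values. -/
noncomputable def defect (α β : Omega) (x : ℝ) (φ : Omega) : ℝ :=
  if φ 0 then proj x β - proj x φ else proj x φ - proj x α

noncomputable def maxDefect (α β : Omega) (x : ℝ) : ℝ :=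
  sSup (insert 0 (defect α β x '' orbitSet α β))

lemma bddAbove_defect (hx0 : 0 ≤ x) (hx1 : x < 1) :
    BddAbove (insert 0 (defect α β x '' orbitSet α β)) := by
  refine ⟨1, ?_⟩
  rintro _ (rfl | ⟨φ, -, rfl⟩)
  · exact zero_le_one
  · obtain ⟨hφ0, hφ1⟩ := proj_mem_Icc φ hx0 hx1
    obtain ⟨hα0, -⟩ := proj_mem_Icc α hx0 hx1
    obtain ⟨-, hβ1⟩ := proj_mem_Icc β hx0 hx1
    unfold defect; split_ifs <;> linarith

lemma maxDefect_nonneg (hx0 : 0 ≤ x) (hx1 : x < 1) : 0 ≤ maxDefect α β x :=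
  le_csSup (bddAbove_defect hx0 hx1) (mem_insert _ _)

lemma defect_le_maxDefect (hx0 : 0 ≤ x) (hx1 : x < 1) {φ : Omega} (hφ : φ ∈ orbitSet α β) :
    defect α β x φ ≤ maxDefect α β x :=
  le_csSup (bddAbove_defect hx0 hx1) (mem_insert_of_mem _ ⟨φ, hφ, rfl⟩)

lemma maxDefect_le {c : ℝ} (hc : 0 ≤ c) (h : ∀ φ ∈ orbitSet α β, defect α β x φ ≤ c) :
    maxDefect α β x ≤ c :=
  csSup_le (insert_nonempty _ _) <| by rintro _ (rfl | ⟨φ, hφ, rfl⟩); exacts [hc, h φ hφ]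

lemma lipschitzOnWith_maxDefect {c : ℝ} {K : NNReal} (hc1 : c < 1)
    (hK : ∀ γ : Omega, LipschitzOnWith K (fun x => proj x γ) (Icc 0 c)) :
    LipschitzOnWith (2 * K) (maxDefect α β) (Icc 0 c) := by
  refine LipschitzOnWith.of_le_add_mul _ fun x hx y hy => ?_
  have hy1 : y < 1 := hy.2.trans_lt hc1
  refine maxDefect_le (add_nonneg (maxDefect_nonneg hy.1 hy1) (by positivity)) fun φ hφ => ?_
  have hd : LipschitzOnWith (K + K) (fun x => defect α β x φ) (Icc 0 c) := by
    by_cases h : φ 0 <;> simp only [defect, h, if_true, if_false, Bool.false_eq_true]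
    exacts [(hK β).sub (hK φ), (hK φ).sub (hK α)]
  calc defect α β x φ ≤ defect α β y φ + (K + K : NNReal) * dist x y := hd.le_add_mul hx hy
    _ ≤ maxDefect α β y + (2 * K : NNReal) * dist x y := by
      rw [two_mul]; gcongr; exact defect_le_maxDefect hy.1 hy1 hφ

lemma proj_sub_proj_le_of_toLex_lt (hx0 : 0 ≤ x) (hx1 : x < 1) {φ ψ : Omega}
    (hφ : φ ∈ orbitSet α β) (hψ : ψ ∈ orbitSet α β) (hlt : toLex φ < toLex ψ) (hhead : φ 0 = ψ 0) :
    proj x φ - proj x ψ ≤ max 0 (x * (2 * maxDefect α β x - (proj x β - proj x α))) := by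
  obtain ⟨j, hagree, hj⟩ := lexLt_iff_toLex_lt.mpr hlt
  rw [Bool.lt_iff] at hj
  have hj0 : j ≠ 0 := by rintro rfl; simp_all
  have hφj : (shift^[j] φ) 0 = false := by rw [shift_iterate_apply, zero_add]; exact hj.1
  have hψj : (shift^[j] ψ) 0 = true := by rw [shift_iterate_apply, zero_add]; exact hj.2
  have hsplit : proj x (shift^[j] φ) - proj x (shift^[j] ψ) =
      defect α β x (shift^[j] φ) + defect α β x (shift^[j] ψ) - (proj x β - proj x α) := by
    simp only [defect, hφj, hψj, if_true, if_false, Bool.false_eq_true]; ring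
  have hle : proj x (shift^[j] φ) - proj x (shift^[j] ψ) ≤
      2 * maxDefect α β x - (proj x β - proj x α) := by
    linarith [defect_le_maxDefect hx0 hx1 (shift_iterate_mem_orbitSet hφ j),
      defect_le_maxDefect hx0 hx1 (shift_iterate_mem_orbitSet hψ j)]
  rw [proj_sub_proj_of_prefix hx0 hx1 j hagree]
  rcases le_or_gt (proj x (shift^[j] φ) - proj x (shift^[j] ψ)) 0 with hneg | hpos
  · exact (mul_nonpos_of_nonneg_of_nonpos (pow_nonneg hx0 j) hneg).trans (le_max_left _ _)
  · refine le_max_of_le_right ?_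
    calc x ^ j * (proj x (shift^[j] φ) - proj x (shift^[j] ψ))
        ≤ x * (proj x (shift^[j] φ) - proj x (shift^[j] ψ)) := by
          gcongr; exact pow_le_of_le_one hx0 hx1.le hj0
      _ ≤ x * (2 * maxDefect α β x - (proj x β - proj x α)) := by gcongr

lemma Admissible.maxDefect_le_max (hadm : Admissible α β) (hx0 : 0 ≤ x) (hx1 : x < 1) :
    maxDefect α β x ≤ max 0 (x * (2 * maxDefect α β x - (proj x β - proj x α))) := by
  refine maxDefect_le (le_max_left _ _) fun φ hφ => ?_
  obtain ⟨hfalse, htrue⟩ := hadm.toLex_le_of_mem_orbitSet hφ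
  cases hφ0 : φ 0
  · simp only [defect, hφ0, Bool.false_eq_true, if_false]
    rcases (hfalse hφ0).lt_or_eq with hlt | heq
    · exact proj_sub_proj_le_of_toLex_lt hx0 hx1 hφ left_mem_orbitSet hlt (hφ0.trans hadm.1.symm)
    · rw [toLex_inj.mp heq, sub_self]; exact le_max_left _ _
  · simp only [defect, hφ0, if_true]
    rcases (htrue hφ0).lt_or_eq with hlt | heq
    · exact proj_sub_proj_le_of_toLex_lt hx0 hx1 right_mem_orbitSet hφ hlt
        (hadm.2.2.1.trans hφ0.symm)
    · rw [toLex_inj.mp heq, sub_self]; exact le_max_left _ _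

lemma proj_eq_of_mem_baseSet {b : ℝ} (hb : b ∈ baseSet α β) : proj b α = proj b β := by
  have h : _ = _ := hb.2
  rw [proj, proj, h]

lemma mem_baseSet_of_proj_eq {r : ℝ} (hr : r ∈ Ico (1 / 2) 1) (h : proj r α = proj r β) :
    r ∈ baseSet α β :=
  ⟨hr, mul_left_cancel₀ (sub_ne_zero.mpr hr.2.ne') h⟩

lemma Admissible.one_sub_two_mul_le (hadm : Admissible α β) (hx0 : 0 ≤ x) (hx1 : x < 1) :
    1 - 2 * x ≤ proj x β - proj x α := by
  linarith [one_sub_le_proj_of_head_true hx0 hx1 hadm.2.2.1, proj_le_of_head_false hx0 hx1 hadm.1]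

lemma Admissible.maxDefect_eq_zero_of_two_mul_le (hadm : Admissible α β) (hx0 : 0 ≤ x)
    (hx1 : x < 1) (h : 2 * maxDefect α β x ≤ proj x β - proj x α) : maxDefect α β x = 0 :=
  le_antisymm ((hadm.maxDefect_le_max hx0 hx1).trans
    (max_le le_rfl (mul_nonpos_of_nonneg_of_nonpos hx0 (by linarith))))
    (maxDefect_nonneg hx0 hx1)

/-- Below the least root `b`, the function `π_x β - π_x α - 2 M(x)` starts at `1` and cannot
vanish: a zero `r` would have `M(r) = 0`, hence be a root in `[1/2, b)`. -/
lemma Admissible.maxDefect_eq_zero_of_lt {b : ℝ} (hadm : Admissible α β)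
    (hb : IsLeast (baseSet α β) b) (hx0 : 0 ≤ x) (hxb : x < b) : maxDefect α β x = 0 := by
  have hb1 : b < 1 := hb.1.1.2
  obtain ⟨K, hK⟩ := exists_lipschitzOnWith_proj (hx0.trans hxb.le) hb1
  set h : ℝ → ℝ := fun t => proj t β - proj t α - 2 * maxDefect α β t with hh
  have hcont : ContinuousOn h (Icc 0 b) := ((hK β).continuousOn.sub (hK α).continuousOn).sub
    (continuousOn_const.mul (lipschitzOnWith_maxDefect hb1 hK).continuousOn)
  have h0 : 0 < h 0 := by
    have hg := hadm.one_sub_two_mul_le le_rfl zero_lt_one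
    have hM := hadm.maxDefect_le_max le_rfl zero_lt_one
    simp only [zero_mul, max_self] at hM
    linarith
  refine hadm.maxDefect_eq_zero_of_two_mul_le hx0 (hxb.trans hb1) (not_lt.mp fun hneg => ?_)
  obtain ⟨r, ⟨hr0, hrx⟩, hr⟩ := intermediate_value_Icc' hx0
    (hcont.mono (Icc_subset_Icc le_rfl hxb.le)) ⟨by simp only [hh]; linarith, h0.le⟩
  have hr1 : r < 1 := by linarith
  have hMr := hadm.maxDefect_eq_zero_of_two_mul_le hr0 hr1 (by simp only [hh] at hr; linarith)
  have hroot : proj r α = proj r β := by simp only [hh] at hr; linarith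
  have hr_half : 1 / 2 ≤ r := by linarith [hadm.one_sub_two_mul_le hr0 hr1]
  linarith [hb.2 (mem_baseSet_of_proj_eq ⟨hr_half, hr1⟩ hroot)]

theorem Admissible.defect_nonpos {b : ℝ} (hadm : Admissible α β) (hb : IsLeast (baseSet α β) b)
    {φ : Omega} (hφ : φ ∈ orbitSet α β) : defect α β b φ ≤ 0 := by
  have hb0 : 0 < b := by linarith [hb.1.1.1]
  have hb1 : b < 1 := hb.1.1.2
  obtain ⟨K, hK⟩ := exists_lipschitzOnWith_proj hb0.le hb1
  have hzero : EqOn (maxDefect α β) 0 (Icc 0 b) :=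
    EqOn.of_subset_closure (fun x hx => hadm.maxDefect_eq_zero_of_lt hb hx.1 hx.2)
      (lipschitzOnWith_maxDefect hb1 hK).continuousOn continuousOn_const Ico_subset_Icc_self
      (closure_Ico hb0.ne).ge
  simpa [hzero ⟨hb0.le, le_rfl⟩] using defect_le_maxDefect hb0.le hb1 hφ

end LeastRoot

/-- Orbits of the branches `t ↦ B t` (digit `0`) and `t ↦ B t + 1 - B` (digit `1`), split at `p`.
At `t = p` either branch is allowed, so this covers both `f_{(B,p,−)}` and `f_{(B,p,+)}`, and also
the values `π_b(Sⁿα)`, `π_b(Sⁿβ)` at the least root. -/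
structure IsItinerary (B p : ℝ) (σ : Omega) (z : ℕ → ℝ) : Prop where
  mem_Icc : ∀ n, z n ∈ Icc 0 1
  succ : ∀ n, z (n + 1) = if σ n then B * z n + 1 - B else B * z n
  le_of_false : ∀ n, σ n = false → z n ≤ p
  le_of_true : ∀ n, σ n = true → p ≤ z n

namespace IsItinerary

variable {B p : ℝ} {σ τ : Omega} {z w : ℕ → ℝ}

lemma shift_iterate (h : IsItinerary B p σ z) (m : ℕ) :
    IsItinerary B p (shift^[m] σ) (fun n => z (n + m)) where
  mem_Icc n := h.mem_Icc _
  succ n := by rw [shift_iterate_apply, Nat.add_right_comm]; exact h.succ _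
  le_of_false n := by rw [shift_iterate_apply]; exact h.le_of_false _
  le_of_true n := by rw [shift_iterate_apply]; exact h.le_of_true _

lemma sub_eq_pow_mul (hz : IsItinerary B p σ z) (hw : IsItinerary B p τ w) :
    ∀ k, (∀ i < k, σ i = τ i) → w k - z k = B ^ k * (w 0 - z 0)
  | 0, _ => by simp
  | k + 1, hag => by
    rw [hz.succ, hw.succ, hag k k.lt_succ_self, pow_succ', mul_assoc,
      ← sub_eq_pow_mul hz hw k fun i hi => hag i (hi.trans k.lt_succ_self)]
    split_ifs <;> ring

lemma start_eq (hB : 1 < B) (hz : IsItinerary B p σ z) (hw : IsItinerary B p σ w) :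
    z 0 = w 0 := by
  by_contra hne
  have hpos : 0 < |w 0 - z 0| := abs_pos.mpr (sub_ne_zero.mpr (Ne.symm hne))
  obtain ⟨n, hn⟩ := pow_unbounded_of_one_lt (|w 0 - z 0|)⁻¹ hB
  have hgap : |w n - z n| ≤ 1 := by
    rw [abs_le]; constructor <;> linarith [(hz.mem_Icc n).1, (hz.mem_Icc n).2,
      (hw.mem_Icc n).1, (hw.mem_Icc n).2]
  rw [hz.sub_eq_pow_mul hw n fun _ _ => rfl, abs_mul, abs_of_pos (by positivity)] at hgap
  linarith [(inv_lt_iff_one_lt_mul₀ hpos).mp hn]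

lemma start_eq_of_toLex_lt (hB : 0 < B) (hz : IsItinerary B p σ z) (hw : IsItinerary B p τ w)
    (h : toLex τ < toLex σ) (h0 : z 0 ≤ w 0) :
    z 0 = w 0 ∧ ∃ k, σ k = true ∧ τ k = false ∧ z k = w k := by
  obtain ⟨k, hag, hk⟩ := lexLt_iff_toLex_lt.mpr h
  rw [Bool.lt_iff] at hk
  have hgap := hz.sub_eq_pow_mul hw k fun i hi => (hag i hi).symm
  have hzk := hz.le_of_true k hk.2
  have hwk := hw.le_of_false k hk.1
  have hstart : w 0 - z 0 = 0 := by
    have hnonneg : 0 ≤ w 0 - z 0 := by linarith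
    nlinarith [pow_pos hB k]
  rw [hstart, mul_zero] at hgap
  exact ⟨by linarith, k, hk.2, hk.1, by linarith⟩

lemma toLex_lt_of_lt (hB : 1 < B) (hz : IsItinerary B p σ z) (hw : IsItinerary B p τ w)
    (h0 : z 0 < w 0) : toLex σ < toLex τ := by
  rcases lt_trichotomy (toLex σ) (toLex τ) with hlt | heq | hgt
  · exact hlt
  · rw [toLex_inj] at heq; subst heq
    exact absurd (hz.start_eq hB hw) h0.ne
  · exact absurd (hz.start_eq_of_toLex_lt (by linarith) hw hgt h0.le).1 h0.ne

lemma toLex_le_of_le (hB : 0 < B) (hz : IsItinerary B p σ z) (hw : IsItinerary B p τ w)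
    (h0 : z 0 ≤ w 0) (hsep : ∀ k, σ k = true → τ k = false → z k ≠ w k) :
    toLex σ ≤ toLex τ :=
  not_lt.mp fun h =>
    let ⟨_, k, hσ, hτ, hk⟩ := hz.start_eq_of_toLex_lt hB hw h h0
    hsep k hσ hτ hk

lemma proj_eq {b : ℝ} (hb0 : 0 ≤ b) (hb1 : b < 1) (hBb : B * b = 1) (h : IsItinerary B p σ z) :
    proj b σ = z 0 := by
  have hpartial : ∀ n, (1 - b) * ∑ k ∈ Finset.range n, (if σ k then (1 : ℝ) else 0) * b ^ k =
      z 0 - b ^ n * z n := fun n => by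
    induction n with
    | zero => simp
    | succ n ih =>
      rw [Finset.sum_range_succ, mul_add, ih, h.succ]
      split_ifs
      · linear_combination (b ^ n * z n - b ^ n) * hBb
      · linear_combination (b ^ n * z n) * hBb
  have htail : Tendsto (fun n => b ^ n * z n) atTop (𝓝 0) :=
    squeeze_zero (fun n => mul_nonneg (pow_nonneg hb0 n) (h.mem_Icc n).1)
      (fun n => mul_le_of_le_one_right (pow_nonneg hb0 n) (h.mem_Icc n).2)
      (tendsto_pow_atTop_nhds_zero_of_lt_one hb0 hb1)
  refine tendsto_nhds_unique
    (((summable_proj σ hb0 hb1).hasSum.tendsto_sum_nat).const_mul (1 - b)) ?_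
  simpa only [hpartial, sub_zero] using tendsto_const_nhds.sub htail

end IsItinerary

section Itineraries

variable {B p y : ℝ}

lemma isItinerary_iterate {f : ℝ → ℝ} {d : ℝ → Bool} (hB : 0 ≤ B) (hBp : B * p ≤ 1)
    (hBp' : B * (1 - p) ≤ 1) (hf : ∀ t, f t = if d t then B * t + 1 - B else B * t)
    (hd0 : ∀ t, d t = false → t ≤ p) (hd1 : ∀ t, d t = true → p ≤ t) (hy : y ∈ Icc 0 1) :
    IsItinerary B p (fun n => d (f^[n] y)) (fun n => f^[n] y) where
  mem_Icc n := by
    induction n with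
    | zero => exact hy
    | succ n ih =>
      obtain ⟨ht0, ht1⟩ := ih
      rw [Function.iterate_succ_apply', hf]
      cases hd : d (f^[n] y)
      · simp only [Bool.false_eq_true, if_false]
        have := hd0 _ hd
        exact ⟨by positivity, by nlinarith⟩
      · simp only [if_true]
        have := hd1 _ hd
        constructor <;> nlinarith
  succ n := by rw [Function.iterate_succ_apply', hf]
  le_of_false n := hd0 _
  le_of_true n := hd1 _

lemma isItinerary_itinMinus (hB : 0 ≤ B) (hBp : B * p ≤ 1) (hBp' : B * (1 - p) ≤ 1)
    (hy : y ∈ Icc 0 1) : IsItinerary B p (itinMinus B p y) (fun n => (fMinus B p)^[n] y) :=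
  isItinerary_iterate (d := fun t => if p < t then true else false) hB hBp hBp'
    (fun t => by by_cases h : p < t <;> simp [fMinus, h, not_le.mpr, le_of_not_gt])
    (fun t h => by simpa using h) (fun t h => by simp at h; exact h.le) hy

lemma isItinerary_itinPlus (hB : 0 ≤ B) (hBp : B * p ≤ 1) (hBp' : B * (1 - p) ≤ 1)
    (hy : y ∈ Icc 0 1) : IsItinerary B p (itinPlus B p y) (fun n => (fPlus B p)^[n] y) :=
  isItinerary_iterate (d := fun t => if p ≤ t then true else false) hB hBp hBp'
    (fun t => by by_cases h : p ≤ t <;> simp [fPlus, h, not_lt.mpr, lt_of_not_ge])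
    (fun t h => by simp at h; exact h.le) (fun t h => by simpa using h) hy

lemma lt_of_itinMinus_eq_true {n : ℕ} (h : itinMinus B p y n = true) :
    p < (fMinus B p)^[n] y := by
  simpa [itinMinus] using h

lemma lt_of_itinPlus_eq_false {n : ℕ} (h : itinPlus B p y n = false) :
    (fPlus B p)^[n] y < p := by
  simpa [itinPlus] using h

end Itineraries

theorem Admissible.isItinerary_proj_shift {α β : Omega} {b B : ℝ} (hadm : Admissible α β)
    (hb : IsLeast (baseSet α β) b) (hBb : B * b = 1) {φ : Omega} (hφ : φ ∈ orbitSet α β) :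
    IsItinerary B (proj b α) φ (fun n => proj b (shift^[n] φ)) := by
  have hb0 : 0 ≤ b := by linarith [hb.1.1.1]
  have hb1 : b < 1 := hb.1.1.2
  refine ⟨fun n => proj_mem_Icc _ hb0 hb1, proj_shift_iterate_succ hb0 hb1 hBb φ,
    fun n h => ?_, fun n h => ?_⟩
  · simpa [defect, shift_iterate_apply, h] using
      hadm.defect_nonpos hb (shift_iterate_mem_orbitSet hφ n)
  · simpa [defect, shift_iterate_apply, h, proj_eq_of_mem_baseSet hb.1] using
      hadm.defect_nonpos hb (shift_iterate_mem_orbitSet hφ n)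

section Membership

variable {α β σ : Omega} {B p y : ℝ} {zα zβ z : ℕ → ℝ}

lemma toLex_cons0_lt_of_lt_shift (hα0 : α 0 = false) (h : toLex σ < toLex (shift α)) :
    toLex (cons0 σ) < toLex α := by
  obtain ⟨k, hag, hk⟩ := lexLt_iff_toLex_lt.mpr h
  refine ⟨k + 1, fun i hi => ?_, hk⟩
  cases i with
  | zero => exact hα0.symm
  | succ i => exact hag i (by omega)

lemma IsItinerary.toLex_cons0_lt (hB : 1 < B) (hα : IsItinerary B p α zα) (hzα : zα 0 = p)
    (hα0 : α 0 = false) (hσ : IsItinerary B p σ z) (hz0 : 0 ≤ z 0) (hz : z 0 < p) :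
    toLex (cons0 σ) < toLex α := by
  refine toLex_cons0_lt_of_lt_shift hα0 (hσ.toLex_lt_of_lt hB (hα.shift_iterate 1) ?_)
  have h1 : zα 1 = B * p := by simpa [hα0, hzα] using hα.succ 0
  show z 0 < zα 1
  nlinarith

lemma mem_Icc_zero_one_of_mem_Ico (hB : 1 < B) (hBp : B * p ≤ 1) (hy : y ∈ Ico 0 p) :
    y ∈ Icc 0 1 :=
  ⟨hy.1, by nlinarith [hy.1, hy.2]⟩

theorem itinMinus_mem_Omega0Minus (hB : 1 < B) (hBp : B * p ≤ 1) (hBp' : B * (1 - p) ≤ 1)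
    (hα : IsItinerary B p α zα) (hβ : IsItinerary B p β zβ) (hzα : zα 0 = p) (hzβ : zβ 0 = p)
    (hα0 : α 0 = false) (hy : y ∈ Ico 0 p) : itinMinus B p y ∈ Omega0Minus α β := by
  have hσ := isItinerary_itinMinus (by linarith) hBp hBp' (mem_Icc_zero_one_of_mem_Ico hB hBp hy)
  refine ⟨fun n => ?_, Or.inl (hα.toLex_cons0_lt hB hzα hα0 hσ hy.1 hy.2)⟩
  simp only [lexLt_iff_toLex_lt, lexLe_iff_toLex_le, not_and, not_le]
  intro hαlt
  have hσn := hσ.shift_iterate n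
  rcases le_or_gt ((fMinus B p)^[n] y) p with hle | hlt
  · refine absurd hαlt (not_lt.mpr (hσn.toLex_le_of_le (by linarith) hα
      (by simpa [hzα] using hle) fun k hk hαk => ?_))
    rw [shift_iterate_apply] at hk
    exact ((hα.le_of_false k hαk).trans_lt (lt_of_itinMinus_eq_true hk)).ne'
  · exact hβ.toLex_lt_of_lt hB hσn (by simpa [hzβ] using hlt)

theorem itinPlus_mem_Omega0Plus (hB : 1 < B) (hBp : B * p ≤ 1) (hBp' : B * (1 - p) ≤ 1)
    (hα : IsItinerary B p α zα) (hβ : IsItinerary B p β zβ) (hzα : zα 0 = p) (hzβ : zβ 0 = p)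
    (hα0 : α 0 = false) (hy : y ∈ Ico 0 p) : itinPlus B p y ∈ Omega0Plus α β := by
  have hσ := isItinerary_itinPlus (by linarith) hBp hBp' (mem_Icc_zero_one_of_mem_Ico hB hBp hy)
  refine ⟨fun n => ?_, hα.toLex_cons0_lt hB hzα hα0 hσ hy.1 hy.2⟩
  simp only [lexLt_iff_toLex_lt, lexLe_iff_toLex_le, not_and]
  intro hαle
  have hσn := hσ.shift_iterate n
  rcases lt_or_ge ((fPlus B p)^[n] y) p with hlt | hle
  · exact absurd hαle (not_le.mpr (hσn.toLex_lt_of_lt hB hα (by simpa [hzα] using hlt)))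
  · refine not_lt.mpr (hβ.toLex_le_of_le (by linarith) hσn (by simpa [hzβ] using hle)
      fun k hβk hk => ?_)
    rw [shift_iterate_apply] at hk
    exact ((lt_of_itinPlus_eq_false hk).trans_le (hβ.le_of_true k hβk)).ne'

end Membership

def toDecimal (σ : Omega) (N : ℕ) : ℤ → Bool :=
  fun j => if -(N : ℤ) ≤ j then σ (j + N).toNat else false

lemma toDecimal_mem_dot {Γ : Set Omega} {σ : Omega} (hσ : σ ∈ Γ) (N : ℕ) :
    toDecimal σ N ∈ dot Γ :=
  ⟨-N, σ, hσ, fun j hj => if_neg (by omega), fun i => by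
    rw [toDecimal, if_pos (by omega)]; congr; omega⟩

lemma radixVal_toDecimal {b B x : ℝ} {σ : Omega} {N : ℕ} (hb0 : 0 < b) (hb1 : b < 1)
    (hB : B = 1 / b) (hσ : proj b σ = b ^ N * (1 - b) * x) : radixVal B (toDecimal σ N) = x := by
  have hB0 : B ≠ 0 := by rw [hB]; positivity
  have hinj : Function.Injective fun k : ℕ => (k : ℤ) - N := fun k l h => by simpa using h
  have hsupp : Function.support (fun j => (if toDecimal σ N j then (1 : ℝ) else 0) * B ^ (-j)) ⊆
      range fun k : ℕ => (k : ℤ) - N := fun j hj => by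
    have hj : -(N : ℤ) ≤ j := by
      by_contra h; exact hj (by simp [toDecimal, h])
    exact ⟨(j + N).toNat, show (((j + N).toNat : ℕ) : ℤ) - N = j by omega⟩
  have hterm : ∀ k : ℕ,
      (if toDecimal σ N ((k : ℤ) - N) then (1 : ℝ) else 0) * B ^ (-((k : ℤ) - N)) =
        B ^ N * ((if σ k then (1 : ℝ) else 0) * b ^ k) := fun k => by
    have hk : -(N : ℤ) ≤ (k : ℤ) - N := by omega
    have hk' : ((k : ℤ) - N + N).toNat = k := by omega
    rw [toDecimal, if_pos hk, hk', neg_sub, zpow_sub₀ hB0, zpow_natCast, zpow_natCast, hB,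
      one_div_pow, one_div_pow]
    field_simp
  have hsum : ∑' k, (if σ k then (1 : ℝ) else 0) * b ^ k = b ^ N * x := by
    have h1b : 1 - b ≠ 0 := by linarith
    rw [proj] at hσ
    apply mul_left_cancel₀ h1b
    linarith
  rw [radixVal, ← hinj.tsum_eq hsupp, tsum_congr hterm, tsum_mul_left, hsum, ← mul_assoc,
    ← mul_pow, hB, one_div_mul_cancel hb0.ne', one_pow, one_mul]

theorem stmt_10_general (α β : Omega) (hadm : Admissible α β)
    (b B p : ℝ) (hb : IsLeast (baseSet α β) b) (hB : B = 1 / b) (hp : p = proj b α)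
    (x : ℝ) (hx : 0 ≤ x) (N : ℕ)
    (hN : IsLeast {n : ℕ | b ^ n * (1 - b) * x < p} N)
    (y : ℝ) (hy : y = b ^ N * (1 - b) * x) :
    ((fun j : ℤ => if -(N : ℤ) ≤ j then itinMinus B p y ((j + N).toNat) else false)
        ∈ dotMinus α β ∧
      radixVal B
        (fun j : ℤ => if -(N : ℤ) ≤ j then itinMinus B p y ((j + N).toNat) else false)
        = x) ∧
    ((fun j : ℤ => if -(N : ℤ) ≤ j then itinPlus B p y ((j + N).toNat) else false)
        ∈ dotPlus α β ∧
      radixVal B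
        (fun j : ℤ => if -(N : ℤ) ≤ j then itinPlus B p y ((j + N).toNat) else false)
        = x) := by
  obtain ⟨⟨hb_half, hb1⟩, -⟩ := hb.1
  have hb0 : 0 < b := by linarith
  have hBb : B * b = 1 := by rw [hB, one_div_mul_cancel hb0.ne']
  have hpb : p ≤ b := hp ▸ proj_le_of_head_false hb0.le hb1 hadm.1
  have hbp : 1 - b ≤ p := by
    rw [hp, proj_eq_of_mem_baseSet hb.1]
    exact one_sub_le_proj_of_head_true hb0.le hb1 hadm.2.2.1
  have hB1 : 1 < B := by rw [hB, lt_one_div one_pos hb0]; simpa using hb1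
  have hBp : B * p ≤ 1 := hBb ▸ mul_le_mul_of_nonneg_left hpb (by linarith)
  have hBp' : B * (1 - p) ≤ 1 := hBb ▸ mul_le_mul_of_nonneg_left (by linarith) (by linarith)
  subst hp
  have hα := hadm.isItinerary_proj_shift hb hBb left_mem_orbitSet
  have hβ := hadm.isItinerary_proj_shift hb hBb right_mem_orbitSet
  have hy' : y ∈ Ico 0 (proj b α) := ⟨hy ▸ by positivity, hy ▸ hN.1⟩
  have hy01 := mem_Icc_zero_one_of_mem_Ico hB1 hBp hy'
  have hσm := isItinerary_itinMinus (by linarith) hBp hBp' hy01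
  have hσp := isItinerary_itinPlus (by linarith) hBp hBp' hy01
  refine ⟨⟨toDecimal_mem_dot (itinMinus_mem_Omega0Minus hB1 hBp hBp' hα hβ rfl
      (proj_eq_of_mem_baseSet hb.1).symm hadm.1 hy') N, radixVal_toDecimal hb0 hb1 hB ?_⟩,
    toDecimal_mem_dot (itinPlus_mem_Omega0Plus hB1 hBp hBp' hα hβ rfl
      (proj_eq_of_mem_baseSet hb.1).symm hadm.1 hy') N, radixVal_toDecimal hb0 hb1 hB ?_⟩
  · rw [hσm.proj_eq hb0.le hb1 hBb, ← hy]; rfl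
  · rw [hσp.proj_eq hb0.le hb1 hBb, ← hy]; rfl

/-- Correctness of the address algorithm. For an admissible non-null pair
`(α,β)`, `b` the least solution, `B = 1/b`, `p = π_b(α)`, `x ≥ 0`, and `N` the least
nonnegative integer with `y := b^N(1−b)x < p`, the decimal built from the itinerary
`τ̂_{(B,p,−)}(y)` (placing digit `σ_{N+j}` at position `j ≥ −N` and `0` elsewhere) lies
in `Ω^•_{(α,β,−)}` and has radix value `x`; analogously for `τ̂_{(B,p,+)}` and
`Ω^•_{(α,β,+)}`. -/
theorem stmt_10 (α β : Omega) (hadm : Admissible α β)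
    (hnonnull : 0 < growth (OmegaUnion α β))
    (b B p : ℝ) (hb : IsLeast (baseSet α β) b) (hB : B = 1 / b) (hp : p = proj b α)
    (x : ℝ) (hx : 0 ≤ x) (N : ℕ)
    (hN : IsLeast {n : ℕ | b ^ n * (1 - b) * x < p} N)
    (y : ℝ) (hy : y = b ^ N * (1 - b) * x) :
    ((fun j : ℤ => if -(N : ℤ) ≤ j then itinMinus B p y ((j + N).toNat) else false)
        ∈ dotMinus α β ∧
      radixVal B
        (fun j : ℤ => if -(N : ℤ) ≤ j then itinMinus B p y ((j + N).toNat) else false)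
        = x) ∧
    ((fun j : ℤ => if -(N : ℤ) ≤ j then itinPlus B p y ((j + N).toNat) else false)
        ∈ dotPlus α β ∧
      radixVal B
        (fun j : ℤ => if -(N : ℤ) ≤ j then itinPlus B p y ((j + N).toNat) else false)
        = x) :=
  stmt_10_general α β hadm b B p hb hB hp x hx N hN y hy
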